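/- arXiv:2310.18286 — 3 statements merged into one kernel-verified Lean document; each statement's English description precedes it below -/
import Mathlib

section
/- Let μ and ν be Borel probability measures with finite first moments on a complete separable metric space (X, d), and let ℱ be the family of all 1-Lipschitz functions f : X → ℝ. Then the integral probability metric induced by ℱ equals the 1-Wasserstein distance: sup_{f 1-Lipschitz} | ∫ f dμ − ∫ f dν | = W(μ, ν) (Kantorovich–Rubinstein duality). -/
open MeasureTheory

/-- The 1-Wasserstein distance: the infimum over couplings `π` of `μ` and `ν`
of the transport cost `∫ d(x,y) dπ(x,y)`. -/
noncomputable def wassersteinDist {X : Type*} [MetricSpace X] [MeasurableSpace X]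
    (μ ν : Measure X) : ℝ :=
  sInf {c : ℝ | ∃ π : Measure (X × X), IsProbabilityMeasure π ∧
    π.map Prod.fst = μ ∧ π.map Prod.snd = ν ∧ c = ∫ p, dist p.1 p.2 ∂π}

/-- A Borel probability measure has finite first moment if `∫ d(x₀, x) dμ(x) < ∞`
for some point `x₀`. -/
def HasFiniteFirstMoment {X : Type*} [MetricSpace X] [MeasurableSpace X]
    (μ : Measure X) : Prop :=
  ∃ x₀ : X, Integrable (fun x => dist x₀ x) μ

/-!
The bound `|∫ f dμ - ∫ f dν| ≤ ∫ d dπ` for 1-Lipschitz `f` and any coupling `π` gives `≤`.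
For `≥`, push `μ` and `ν` onto finitely many points `z i`, `w j` by measurable maps `T`, `S`
whose displacement costs `∫ d(x, z (T x)) dμ`, `∫ d(y, w (S y)) dν` are small (nearest points
of a dense sequence, plus dominated convergence); call the discrete marginals `a` and `b`.
Every transport plan between `a` and `b` lifts to a coupling of `μ` and `ν` (on each block
`T⁻¹{i} × S⁻¹{j}`, a multiple of the product of the conditional measures), so each plan costs
at least `W(μ, ν)` minus the displacement costs. Linear programming duality for the discrete
problem, obtained by separating `(a, b, r)`, for `r` below the cost of every plan, from the image
of the simplex under `x ↦ (row sums, column sums, cost)`, then yields potentials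
`u i + v j ≤ d(z i, w j)`, and the `c`-transform `y ↦ min_j (d(y, w j) - v j)` is a 1-Lipschitz
function nearly attaining `W(μ, ν)`.
-/

open Filter Topology ProbabilityTheory
open scoped ENNReal NNReal

section FirstMoment

variable {X : Type*} [MetricSpace X] [MeasurableSpace X] [OpensMeasurableSpace X] {μ : Measure X}

theorem HasFiniteFirstMoment.integrable_of_lipschitzWith [IsFiniteMeasure μ]
    (hμ : HasFiniteFirstMoment μ) {K : ℝ≥0} {f : X → ℝ} (hf : LipschitzWith K f) :
    Integrable f μ := by
  obtain ⟨x₀, hx₀⟩ := hμ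
  refine ((integrable_const |f x₀|).add (hx₀.const_mul K)).mono'
    hf.continuous.aestronglyMeasurable (.of_forall fun x => ?_)
  have hfx : |f x - f x₀| ≤ K * dist x₀ x := by
    simpa [Real.dist_eq, dist_comm, abs_sub_comm] using hf.dist_le_mul x x₀
  show |f x| ≤ |f x₀| + K * dist x₀ x
  linarith [abs_sub_abs_le_abs_sub (f x) (f x₀)]

theorem HasFiniteFirstMoment.exists_fin_approx [TopologicalSpace.SeparableSpace X]
    [IsFiniteMeasure μ] (hμ : HasFiniteFirstMoment μ) {ε : ℝ} (hε : 0 < ε) :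
    ∃ (n : ℕ) (T : X → Fin n) (z : Fin n → X), Measurable T ∧
      Integrable (fun x => dist x (z (T x))) μ ∧ ∫ x, dist x (z (T x)) ∂μ < ε := by
  have := UniformSpace.secondCountable_of_separable X
  have : Nonempty X := let ⟨x₀, _⟩ := hμ; ⟨x₀⟩
  set e := TopologicalSpace.denseSeq X
  have hbound : ∀ N x, dist x (SimpleFunc.nearestPt e N x) ≤ dist (e 0) x := fun N x => by
    have := SimpleFunc.edist_nearestPt_le e x (Nat.zero_le N)
    rwa [edist_dist, edist_dist, ENNReal.ofReal_le_ofReal_iff dist_nonneg, dist_comm] at this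
  have hint₀ : Integrable (fun x => dist (e 0) x) μ :=
    hμ.integrable_of_lipschitzWith (LipschitzWith.dist_right _)
  have hint : ∀ N, Integrable (fun x => dist x (SimpleFunc.nearestPt e N x)) μ := fun N =>
    hint₀.mono' (measurable_id.dist (SimpleFunc.nearestPt e N).measurable).aestronglyMeasurable
      (.of_forall fun x => by simpa using hbound N x)
  have hlim : Tendsto (fun N => ∫ x, dist x (SimpleFunc.nearestPt e N x) ∂μ) atTop (𝓝 0) := by
    have := tendsto_integral_of_dominated_convergence _ (fun N => (hint N).1) hint₀
      (fun N => .of_forall fun x => by simpa using hbound N x) (.of_forall fun x =>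
        tendsto_const_nhds.dist (SimpleFunc.tendsto_nearestPt
          ((TopologicalSpace.denseRange_denseSeq X).closure_range ▸ Set.mem_univ x)))
    simpa only [dist_self, integral_zero] using this
  obtain ⟨N, hN⟩ := (hlim.eventually (gt_mem_nhds hε)).exists
  have hzT : ∀ x, e (Fin.ofNat (N + 1) (SimpleFunc.nearestPtInd e N x) : ℕ)
      = SimpleFunc.nearestPt e N x := fun x => by
    rw [Fin.val_ofNat, Nat.mod_eq_of_lt (Nat.lt_succ_of_le (SimpleFunc.nearestPtInd_le e N x))]
    rfl
  refine ⟨N + 1, fun x => Fin.ofNat (N + 1) (SimpleFunc.nearestPtInd e N x), fun k => e k,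
    (measurable_from_nat (f := Fin.ofNat (N + 1))).comp (SimpleFunc.nearestPtInd e N).measurable,
    ?_, ?_⟩
  · simpa only [hzT] using hint N
  · simpa only [hzT] using hN

end FirstMoment

theorem abs_integral_sub_integral_le_integral_dist {Ω X : Type*} [MeasurableSpace Ω]
    [PseudoMetricSpace X] {m : Measure Ω} {f : X → ℝ} (hf : LipschitzWith 1 f) {φ ψ : Ω → X}
    (hφ : Integrable (fun ω => f (φ ω)) m) (hψ : Integrable (fun ω => f (ψ ω)) m)
    (hd : Integrable (fun ω => dist (φ ω) (ψ ω)) m) :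
    |∫ ω, f (φ ω) ∂m - ∫ ω, f (ψ ω) ∂m| ≤ ∫ ω, dist (φ ω) (ψ ω) ∂m := by
  rw [← integral_sub hφ hψ, ← Real.norm_eq_abs]
  exact norm_integral_le_of_norm_le hd
    (.of_forall fun ω => by simpa [Real.dist_eq] using hf.dist_le_mul (φ ω) (ψ ω))

section Coupling

variable {X : Type*} [MetricSpace X] [MeasurableSpace X] {μ ν : Measure X} {π : Measure (X × X)}

theorem wassersteinDist_nonneg : 0 ≤ wassersteinDist μ ν :=
  Real.sInf_nonneg <| by
    rintro _ ⟨π, -, -, -, rfl⟩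
    exact integral_nonneg fun _ => dist_nonneg

theorem wassersteinDist_le_integral_dist [IsProbabilityMeasure π] (h₁ : π.map Prod.fst = μ)
    (h₂ : π.map Prod.snd = ν) : wassersteinDist μ ν ≤ ∫ p, dist p.1 p.2 ∂π :=
  csInf_le ⟨0, by rintro _ ⟨π, -, -, -, rfl⟩; exact integral_nonneg fun _ => dist_nonneg⟩
    ⟨π, inferInstance, h₁, h₂, rfl⟩

theorem integral_dist_le_of_map_fst_of_map_snd (h₁ : π.map Prod.fst = μ)
    (h₂ : π.map Prod.snd = ν) {φ ψ : X → X} (hφ : Integrable (fun x => dist x (φ x)) μ)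
    (hψ : Integrable (fun y => dist y (ψ y)) ν)
    (hφψ : Integrable (fun p : X × X => dist (φ p.1) (ψ p.2)) π) :
    ∫ p, dist p.1 p.2 ∂π ≤
      ∫ x, dist x (φ x) ∂μ + ∫ p, dist (φ p.1) (ψ p.2) ∂π + ∫ y, dist y (ψ y) ∂ν := by
  have i₁ : Integrable (fun p : X × X => dist p.1 (φ p.1)) π :=
    Integrable.comp_measurable (by rwa [h₁]) measurable_fst
  have i₃ : Integrable (fun p : X × X => dist p.2 (ψ p.2)) π :=
    Integrable.comp_measurable (by rwa [h₂]) measurable_snd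
  have e₁ : ∫ p, dist p.1 (φ p.1) ∂π = ∫ x, dist x (φ x) ∂μ := by
    rw [← integral_map (f := fun x => dist x (φ x)) measurable_fst.aemeasurable
      (by rw [h₁]; exact hφ.1), h₁]
  have e₃ : ∫ p, dist p.2 (ψ p.2) ∂π = ∫ y, dist y (ψ y) ∂ν := by
    rw [← integral_map (f := fun y => dist y (ψ y)) measurable_snd.aemeasurable
      (by rw [h₂]; exact hψ.1), h₂]
  calc ∫ p, dist p.1 p.2 ∂π
      ≤ ∫ p, (dist p.1 (φ p.1) + dist (φ p.1) (ψ p.2) + dist p.2 (ψ p.2)) ∂π :=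
        integral_mono_of_nonneg (.of_forall fun _ => dist_nonneg) ((i₁.add hφψ).add i₃)
          (.of_forall fun p => by
            simpa [dist_comm p.2] using dist_triangle4 p.1 (φ p.1) (ψ p.2) p.2)
    _ = _ := by rw [integral_add (i₁.fun_add hφψ) i₃, integral_add i₁ hφψ, e₁, e₃]

variable [OpensMeasurableSpace X] [SecondCountableTopology X]

theorem abs_integral_sub_integral_le_of_coupling [IsFiniteMeasure π]
    (hμ : HasFiniteFirstMoment μ) (hν : HasFiniteFirstMoment ν) (h₁ : π.map Prod.fst = μ)
    (h₂ : π.map Prod.snd = ν) {f : X → ℝ} (hf : LipschitzWith 1 f) :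
    |∫ x, f x ∂μ - ∫ x, f x ∂ν| ≤ ∫ p, dist p.1 p.2 ∂π := by
  subst h₁ h₂
  have hd : Integrable (fun p : X × X => dist p.1 p.2) π := by
    obtain ⟨x₀, hx₀⟩ := hμ
    have hx₀' := hν.integrable_of_lipschitzWith (LipschitzWith.dist_right x₀)
    exact ((hx₀.comp_measurable measurable_fst).add (hx₀'.comp_measurable measurable_snd)).mono'
      (continuous_fst.dist continuous_snd).aestronglyMeasurable
      (.of_forall fun p => by simpa using dist_triangle_left p.1 p.2 x₀)
  rw [integral_map measurable_fst.aemeasurable hf.continuous.aestronglyMeasurable,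
    integral_map measurable_snd.aemeasurable hf.continuous.aestronglyMeasurable]
  exact abs_integral_sub_integral_le_integral_dist hf
    ((hμ.integrable_of_lipschitzWith hf).comp_measurable measurable_fst)
    ((hν.integrable_of_lipschitzWith hf).comp_measurable measurable_snd) hd

theorem abs_integral_sub_integral_le_wassersteinDist [IsProbabilityMeasure μ]
    [IsProbabilityMeasure ν] (hμ : HasFiniteFirstMoment μ) (hν : HasFiniteFirstMoment ν)
    {f : X → ℝ} (hf : LipschitzWith 1 f) :
    |∫ x, f x ∂μ - ∫ x, f x ∂ν| ≤ wassersteinDist μ ν := by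
  refine le_csInf ⟨_, μ.prod ν, inferInstance, by simp, by simp, rfl⟩ ?_
  rintro _ ⟨π, hπ, h₁, h₂, rfl⟩
  exact abs_integral_sub_integral_le_of_coupling hμ hν h₁ h₂ hf

end Coupling

section DiscreteDuality

variable {ι κ : Type*} [Fintype ι] [Fintype κ]

theorem StrongDual.apply_pi_prod_pi_prod [DecidableEq ι] [DecidableEq κ]
    (φ : StrongDual ℝ ((ι → ℝ) × (κ → ℝ) × ℝ)) (r : ι → ℝ) (q : κ → ℝ) (t : ℝ) :
    φ (r, q, t) = ∑ i, r i * φ (Pi.single i 1, 0, 0) + ∑ j, q j * φ (0, Pi.single j 1, 0)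
      + t * φ (0, 0, 1) := by
  have : ((r, q, t) : (ι → ℝ) × (κ → ℝ) × ℝ) = ∑ i, r i • (Pi.single i 1, 0, 0)
      + ∑ j, q j • (0, Pi.single j 1, 0) + t • (0, 0, 1) := by
    ext <;> simp [Prod.fst_sum, Prod.snd_sum, Finset.sum_apply, Pi.single_apply]
  rw [this, map_add, map_add, map_sum, map_sum]
  simp only [map_smul, smul_eq_mul]

noncomputable def marginalsAndCost (c : ι × κ → ℝ) :
    (ι × κ → ℝ) →ₗ[ℝ] (ι → ℝ) × (κ → ℝ) × ℝ where
  toFun x := (fun i => ∑ j, x (i, j), fun j => ∑ i, x (i, j), ∑ k, x k * c k)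
  map_add' x y := by ext <;> simp [Finset.sum_add_distrib, add_mul]
  map_smul' r x := by ext <;> simp [Finset.mul_sum, mul_assoc]

theorem exists_separation_of_forall_lt_cost (c : ι × κ → ℝ) {a : ι → ℝ} {b : κ → ℝ} {w : ℝ}
    (hw : ∀ x : ι × κ → ℝ, 0 ≤ x → (∀ i, ∑ j, x (i, j) = a i) → (∀ j, ∑ i, x (i, j) = b j) →
      w < ∑ k, x k * c k) :
    ∃ (g : ι → ℝ) (h : κ → ℝ) (α s : ℝ), (∀ x ∈ stdSimplex ℝ (ι × κ),
      ∑ i, (∑ j, x (i, j)) * g i + ∑ j, (∑ i, x (i, j)) * h j + (∑ k, x k * c k) * α < s) ∧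
      s < ∑ i, a i * g i + ∑ j, b j * h j + w * α := by
  classical
  set L := marginalsAndCost c
  have hL : ∀ x, L x = (fun i => ∑ j, x (i, j), fun j => ∑ i, x (i, j), ∑ k, x k * c k) :=
    fun _ => rfl
  have hnotMem : (a, b, w) ∉ L '' stdSimplex ℝ (ι × κ) := by
    rintro ⟨x, hx, heq⟩
    simp only [hL, Prod.ext_iff, funext_iff] at heq
    exact (hw x hx.1 heq.1 heq.2.1).ne' heq.2.2
  obtain ⟨φ, s, hφL, hφ⟩ := geometric_hahn_banach_closed_point
    ((convex_stdSimplex ℝ _).linear_image L)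
    ((isCompact_stdSimplex ℝ _).image L.continuous_of_finiteDimensional).isClosed hnotMem
  refine ⟨fun i => φ (Pi.single i 1, 0, 0), fun j => φ (0, Pi.single j 1, 0), φ (0, 0, 1), s,
    fun x hx => ?_, by rwa [φ.apply_pi_prod_pi_prod] at hφ⟩
  have := hφL _ ⟨x, hx, rfl⟩
  rwa [hL, φ.apply_pi_prod_pi_prod] at this

theorem exists_potentials_of_forall_lt_cost (c : ι × κ → ℝ) {a : ι → ℝ} {b : κ → ℝ}
    (ha : 0 ≤ a) (hb : 0 ≤ b) (hsa : ∑ i, a i = 1) (hsb : ∑ j, b j = 1) {w : ℝ}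
    (hw : ∀ x : ι × κ → ℝ, 0 ≤ x → (∀ i, ∑ j, x (i, j) = a i) → (∀ j, ∑ i, x (i, j) = b j) →
      w < ∑ k, x k * c k) :
    ∃ (u : ι → ℝ) (v : κ → ℝ), (∀ i j, u i + v j ≤ c (i, j)) ∧
      w < ∑ i, a i * u i + ∑ j, b j * v j := by
  classical
  obtain ⟨g, h, α, s, hplan, hab⟩ := exists_separation_of_forall_lt_cost c hw
  -- The product plan `a ⊗ b` costs more than `w`, which forces `α < 0`.
  have hα : α < 0 := by
    set x : ι × κ → ℝ := fun k => a k.1 * b k.2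
    have hrow : ∀ i, ∑ j, x (i, j) = a i := fun i => by simp [x, ← Finset.mul_sum, hsb]
    have hcol : ∀ j, ∑ i, x (i, j) = b j := fun j => by simp [x, ← Finset.sum_mul, hsa]
    have hxs : x ∈ stdSimplex ℝ (ι × κ) :=
      ⟨fun k => mul_nonneg (ha _) (hb _), by rw [Fintype.sum_prod_type]; simp [hrow, hsa]⟩
    have := hplan x hxs
    simp only [hrow, hcol] at this
    nlinarith [hw x hxs.1 hrow hcol]
  refine ⟨fun i => (g i - s) / -α, fun j => h j / -α, fun i j => ?_, ?_⟩
  · have := hplan _ (single_mem_stdSimplex ℝ (i, j))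
    simp only [Pi.single_apply, Prod.mk.injEq, ite_and, Finset.sum_ite_irrel, Finset.sum_ite_eq',
      Finset.mem_univ, ↓reduceIte, Finset.sum_const_zero, ite_mul, one_mul, zero_mul] at this
    rw [← add_div, div_le_iff₀ (neg_pos.2 hα)]
    linarith
  · simp only [mul_div_assoc', ← Finset.sum_div, mul_sub, Finset.sum_sub_distrib,
      ← Finset.sum_mul, hsa, ← add_div]
    rw [lt_div_iff₀ (neg_pos.2 hα)]
    linarith

end DiscreteDuality

section DiscreteKantorovichRubinstein

variable {X ι κ : Type*} [PseudoMetricSpace X]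

theorem exists_lipschitzWith_of_add_le_dist [Fintype κ] [Nonempty κ] (z : ι → X) (w : κ → X)
    {u : ι → ℝ} {v : κ → ℝ} (huv : ∀ i j, u i + v j ≤ dist (z i) (w j)) :
    ∃ f : X → ℝ, LipschitzWith 1 f ∧ (∀ i, u i ≤ f (z i)) ∧ ∀ j, f (w j) ≤ -v j := by
  set f : X → ℝ := fun y => Finset.univ.inf' Finset.univ_nonempty fun j => dist y (w j) - v j
  refine ⟨f, LipschitzWith.of_le_add fun y y' => ?_, fun i => Finset.le_inf' _ _ fun j _ => ?_,
    fun j => (Finset.inf'_le _ (Finset.mem_univ j)).trans_eq (by simp)⟩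
  · obtain ⟨j, -, hj⟩ :=
      Finset.exists_mem_eq_inf' Finset.univ_nonempty fun j => dist y' (w j) - v j
    have hfy' : f y' = dist y' (w j) - v j := hj
    calc f y ≤ dist y (w j) - v j := Finset.inf'_le _ (Finset.mem_univ j)
      _ ≤ f y' + dist y y' := by linarith [dist_triangle y y' (w j)]
  · linarith [huv i j]

theorem exists_lipschitzWith_lt_sum_sub_sum [Fintype ι] [Fintype κ] (z : ι → X) (w : κ → X)
    {a : ι → ℝ} {b : κ → ℝ} (ha : 0 ≤ a) (hb : 0 ≤ b) (hsa : ∑ i, a i = 1)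
    (hsb : ∑ j, b j = 1) {r : ℝ}
    (hr : ∀ x : ι × κ → ℝ, 0 ≤ x → (∀ i, ∑ j, x (i, j) = a i) → (∀ j, ∑ i, x (i, j) = b j) →
      r < ∑ k, x k * dist (z k.1) (w k.2)) :
    ∃ f : X → ℝ, LipschitzWith 1 f ∧ r < ∑ i, a i * f (z i) - ∑ j, b j * f (w j) := by
  obtain ⟨u, v, huv, hval⟩ :=
    exists_potentials_of_forall_lt_cost (fun k => dist (z k.1) (w k.2)) ha hb hsa hsb hr
  have : Nonempty κ := by
    obtain ⟨j, -, -⟩ := Finset.exists_ne_zero_of_sum_ne_zero (hsb.trans_ne one_ne_zero)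
    exact ⟨j⟩
  obtain ⟨f, hf, hu, hv⟩ := exists_lipschitzWith_of_add_le_dist z w huv
  refine ⟨f, hf, hval.trans_le ?_⟩
  rw [sub_eq_add_neg, ← Finset.sum_neg_distrib]
  exact add_le_add (Finset.sum_le_sum fun i _ => mul_le_mul_of_nonneg_left (hu i) (ha i))
    (Finset.sum_le_sum fun j _ => by linarith [mul_le_mul_of_nonneg_left (hv j) (hb j)])

end DiscreteKantorovichRubinstein

theorem integral_comp_eq_sum_measureReal_preimage {Ω ι : Type*} [MeasurableSpace Ω]
    [Fintype ι] [MeasurableSpace ι] [MeasurableSingletonClass ι] {m : Measure Ω}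
    [IsFiniteMeasure m] {T : Ω → ι} (hT : Measurable T) (g : ι → ℝ) :
    ∫ ω, g (T ω) ∂m = ∑ i, m.real (T ⁻¹' {i}) * g i := by
  rw [← integral_map hT.aemeasurable Integrable.of_finite.aestronglyMeasurable,
    integral_fintype Integrable.of_finite]
  simp [map_measureReal_apply hT (measurableSet_singleton _)]

-- `μ[|s] = 0` when `μ s = 0`; the bound `c ≤ μ s` then forces `c = 0`.
theorem ProbabilityTheory.mul_cond_apply_of_le {Ω : Type*} [MeasurableSpace Ω] {μ : Measure Ω}
    [IsFiniteMeasure μ] {s t : Set Ω} (hs : MeasurableSet s) (hst : s ⊆ t) {c : ℝ≥0∞}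
    (hc : c ≤ μ s) : c * μ[t | s] = c := by
  rw [cond_apply hs, Set.inter_eq_left.2 hst]
  rcases eq_or_ne (μ s) 0 with h | h
  · simp [le_zero_iff.1 (h ▸ hc)]
  · rw [ENNReal.inv_mul_cancel h (measure_ne_top μ s), mul_one]

theorem ENNReal.apply_le_of_sum_eq {α : Type*} [Fintype α] {f : α → ℝ≥0∞} {c : ℝ≥0∞}
    (h : ∑ a, f a = c) (a : α) : f a ≤ c :=
  h ▸ Finset.single_le_sum (fun _ _ => zero_le) (Finset.mem_univ a)

section BlockCoupling

variable {X Y ι κ : Type*} [MeasurableSpace X] [MeasurableSpace Y] [Fintype ι] [Fintype κ]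

noncomputable def blockCoupling (μ : Measure X) (ν : Measure Y) (T : X → ι) (S : Y → κ)
    (x : ι × κ → ℝ≥0∞) : Measure (X × Y) :=
  ∑ k, x k • (μ[|T ⁻¹' {k.1}]).prod (ν[|S ⁻¹' {k.2}])

variable {μ : Measure X} {ν : Measure Y} {T : X → ι} {S : Y → κ} {x : ι × κ → ℝ≥0∞}

theorem blockCoupling_apply_prod (s : Set X) (t : Set Y) :
    blockCoupling μ ν T S x (s ×ˢ t) = ∑ k, x k * (μ[s | T ⁻¹' {k.1}] * ν[t | S ⁻¹' {k.2}]) := by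
  simp [blockCoupling, Measure.prod_prod]

variable [IsFiniteMeasure μ] [IsFiniteMeasure ν] [MeasurableSpace ι] [MeasurableSpace κ]
  [DiscreteMeasurableSpace ι] [DiscreteMeasurableSpace κ]

theorem blockCoupling_apply_preimage_prod (hT : Measurable T) (hS : Measurable S)
    (hrow : ∀ i, ∑ j, x (i, j) = μ (T ⁻¹' {i})) (hcol : ∀ j, ∑ i, x (i, j) = ν (S ⁻¹' {j}))
    (i : ι) (j : κ) : blockCoupling μ ν T S x ((T ⁻¹' {i}) ×ˢ (S ⁻¹' {j})) = x (i, j) := by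
  rw [blockCoupling_apply_prod, Finset.sum_eq_single (i, j)]
  · rw [← mul_assoc, mul_cond_apply_of_le (hT (measurableSet_singleton i)) subset_rfl
        (ENNReal.apply_le_of_sum_eq (hrow i) j),
      mul_cond_apply_of_le (hS (measurableSet_singleton j)) subset_rfl
        (ENNReal.apply_le_of_sum_eq (hcol j) i)]
  · rintro ⟨i', j'⟩ - hne
    rcases ne_or_eq i' i with hi | rfl
    · have : T ⁻¹' {i'} ∩ T ⁻¹' {i} = ∅ :=
        Set.eq_empty_of_forall_notMem fun ω ⟨h₁, h₂⟩ => hi (Eq.trans (Eq.symm h₁) h₂)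
      simp [cond_apply (hT (measurableSet_singleton i')), this]
    · have hj : j' ≠ j := fun h => hne (h ▸ rfl)
      have : S ⁻¹' {j'} ∩ S ⁻¹' {j} = ∅ :=
        Set.eq_empty_of_forall_notMem fun ω ⟨h₁, h₂⟩ => hj (Eq.trans (Eq.symm h₁) h₂)
      simp [cond_apply (hS (measurableSet_singleton j')), this]
  · simp

theorem map_fst_blockCoupling (hT : Measurable T) (hS : Measurable S)
    (hrow : ∀ i, ∑ j, x (i, j) = μ (T ⁻¹' {i})) (hcol : ∀ j, ∑ i, x (i, j) = ν (S ⁻¹' {j})) :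
    (blockCoupling μ ν T S x).map Prod.fst = μ := by
  ext t ht
  rw [Measure.map_apply measurable_fst ht, ← Set.prod_univ, blockCoupling_apply_prod,
    Fintype.sum_prod_type]
  conv_rhs => rw [← sum_meas_smul_cond_fiber hT μ]
  simp only [Measure.coe_finsetSum, Finset.sum_apply, Measure.smul_apply, smul_eq_mul]
  refine Finset.sum_congr rfl fun i _ => ?_
  rw [← hrow i, Finset.sum_mul]
  refine Finset.sum_congr rfl fun j _ => ?_
  rw [mul_left_comm, mul_cond_apply_of_le (hS (measurableSet_singleton j)) (Set.subset_univ _)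
    (ENNReal.apply_le_of_sum_eq (hcol j) i), mul_comm]

theorem map_snd_blockCoupling (hT : Measurable T) (hS : Measurable S)
    (hrow : ∀ i, ∑ j, x (i, j) = μ (T ⁻¹' {i})) (hcol : ∀ j, ∑ i, x (i, j) = ν (S ⁻¹' {j})) :
    (blockCoupling μ ν T S x).map Prod.snd = ν := by
  ext t ht
  rw [Measure.map_apply measurable_snd ht, ← Set.univ_prod, blockCoupling_apply_prod,
    Fintype.sum_prod_type_right]
  conv_rhs => rw [← sum_meas_smul_cond_fiber hS ν]
  simp only [Measure.coe_finsetSum, Finset.sum_apply, Measure.smul_apply, smul_eq_mul]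
  refine Finset.sum_congr rfl fun j _ => ?_
  rw [← hcol j, Finset.sum_mul]
  refine Finset.sum_congr rfl fun i _ => ?_
  rw [← mul_assoc, mul_cond_apply_of_le (hT (measurableSet_singleton i)) (Set.subset_univ _)
    (ENNReal.apply_le_of_sum_eq (hrow i) j)]

end BlockCoupling

section Duality

variable {X : Type*} [MetricSpace X] [MeasurableSpace X] {μ ν : Measure X}
  [IsProbabilityMeasure μ] [IsProbabilityMeasure ν]

theorem wassersteinDist_le_of_transportPlan {ι κ : Type*} [Fintype ι] [Fintype κ]
    [MeasurableSpace ι] [MeasurableSpace κ] [DiscreteMeasurableSpace ι] [DiscreteMeasurableSpace κ]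
    {T : X → ι} {S : X → κ} (hT : Measurable T) (hS : Measurable S) (z : ι → X) (w : κ → X)
    (hTint : Integrable (fun x => dist x (z (T x))) μ)
    (hSint : Integrable (fun y => dist y (w (S y))) ν) (x : ι × κ → ℝ) (hx : 0 ≤ x)
    (hrow : ∀ i, ∑ j, x (i, j) = μ.real (T ⁻¹' {i}))
    (hcol : ∀ j, ∑ i, x (i, j) = ν.real (S ⁻¹' {j})) :
    wassersteinDist μ ν ≤ ∫ x, dist x (z (T x)) ∂μ + ∑ k, x k * dist (z k.1) (w k.2)
      + ∫ y, dist y (w (S y)) ∂ν := by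
  set π := blockCoupling μ ν T S fun k => ENNReal.ofReal (x k)
  have hrow' : ∀ i, ∑ j, ENNReal.ofReal (x (i, j)) = μ (T ⁻¹' {i}) := fun i => by
    rw [← ENNReal.ofReal_sum_of_nonneg fun j _ => hx _, hrow i, ofReal_measureReal]
  have hcol' : ∀ j, ∑ i, ENNReal.ofReal (x (i, j)) = ν (S ⁻¹' {j}) := fun j => by
    rw [← ENNReal.ofReal_sum_of_nonneg fun i _ => hx _, hcol j, ofReal_measureReal]
  have h₁ : π.map Prod.fst = μ := map_fst_blockCoupling hT hS hrow' hcol'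
  have h₂ : π.map Prod.snd = ν := map_snd_blockCoupling hT hS hrow' hcol'
  have : IsProbabilityMeasure π :=
    (Measure.isProbabilityMeasure_map_iff measurable_fst.aemeasurable).1
      (by rw [h₁]; infer_instance)
  have hTS : Measurable fun p : X × X => (T p.1, S p.2) :=
    (hT.comp measurable_fst).prodMk (hS.comp measurable_snd)
  have hmid : ∫ p, dist (z (T p.1)) (w (S p.2)) ∂π = ∑ k, x k * dist (z k.1) (w k.2) := by
    refine (integral_comp_eq_sum_measureReal_preimage hTS fun k => dist (z k.1) (w k.2)).trans
      (Finset.sum_congr rfl fun k _ => ?_)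
    have : (fun p : X × X => (T p.1, S p.2)) ⁻¹' {k} = (T ⁻¹' {k.1}) ×ˢ (S ⁻¹' {k.2}) := by
      ext; simp [Prod.ext_iff]
    rw [this, measureReal_def, blockCoupling_apply_preimage_prod hT hS hrow' hcol',
      ENNReal.toReal_ofReal (hx k)]
  calc wassersteinDist μ ν ≤ ∫ p, dist p.1 p.2 ∂π := wassersteinDist_le_integral_dist h₁ h₂
    _ ≤ _ := integral_dist_le_of_map_fst_of_map_snd h₁ h₂ hTint hSint
      ((Integrable.of_finite (f := fun k : ι × κ => dist (z k.1) (w k.2))).comp_measurable hTS)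
    _ = _ := by rw [hmid]

theorem exists_lipschitzWith_wassersteinDist_sub_lt [TopologicalSpace.SeparableSpace X]
    [OpensMeasurableSpace X] (hμ : HasFiniteFirstMoment μ) (hν : HasFiniteFirstMoment ν)
    {ε : ℝ} (hε : 0 < ε) :
    ∃ f : X → ℝ, LipschitzWith 1 f ∧ wassersteinDist μ ν - ε < ∫ x, f x ∂μ - ∫ x, f x ∂ν := by
  obtain ⟨n, T, z, hT, hTint, hTε⟩ := hμ.exists_fin_approx (show 0 < ε / 4 by positivity)
  obtain ⟨m, S, w, hS, hSint, hSε⟩ := hν.exists_fin_approx (show 0 < ε / 4 by positivity)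
  have hsa : ∑ i, μ.real (T ⁻¹' {i}) = 1 := by
    rw [sum_measureReal_preimage_singleton _ fun i _ => hT (measurableSet_singleton i)]
    simp
  have hsb : ∑ j, ν.real (S ⁻¹' {j}) = 1 := by
    rw [sum_measureReal_preimage_singleton _ fun j _ => hS (measurableSet_singleton j)]
    simp
  obtain ⟨f, hf, hlt⟩ := exists_lipschitzWith_lt_sum_sub_sum z w (fun _ => measureReal_nonneg)
    (fun _ => measureReal_nonneg) hsa hsb (r := wassersteinDist μ ν - ε / 2)
    fun x hx hrow hcol => by
      linarith [wassersteinDist_le_of_transportPlan hT hS z w hTint hSint x hx hrow hcol]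
  have hμf := abs_integral_sub_integral_le_integral_dist hf (φ := fun x => x)
    (hμ.integrable_of_lipschitzWith hf)
    ((Integrable.of_finite (f := fun i => f (z i))).comp_measurable hT) hTint
  have hνf := abs_integral_sub_integral_le_integral_dist hf (φ := fun x => x)
    (hν.integrable_of_lipschitzWith hf)
    ((Integrable.of_finite (f := fun j => f (w j))).comp_measurable hS) hSint
  rw [integral_comp_eq_sum_measureReal_preimage hT fun i => f (z i), abs_le] at hμf
  rw [integral_comp_eq_sum_measureReal_preimage hS fun j => f (w j), abs_le] at hνf
  exact ⟨f, hf, by linarith [hμf.1, hνf.2]⟩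

end Duality

theorem stmt_2_general {X : Type*} [MetricSpace X]
    [TopologicalSpace.SeparableSpace X] [MeasurableSpace X] [BorelSpace X]
    (μ ν : Measure X) [IsProbabilityMeasure μ] [IsProbabilityMeasure ν]
    (hμ : HasFiniteFirstMoment μ) (hν : HasFiniteFirstMoment ν) :
    (⨆ f ∈ {f : X → ℝ | LipschitzWith 1 f}, |(∫ x, f x ∂μ) - ∫ x, f x ∂ν|)
      = wassersteinDist μ ν := by
  have := UniformSpace.secondCountable_of_separable X
  have hle : ∀ f : X → ℝ, (⨆ _ : f ∈ {f : X → ℝ | LipschitzWith 1 f},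
      |(∫ x, f x ∂μ) - ∫ x, f x ∂ν|) ≤ wassersteinDist μ ν := fun f =>
    Real.iSup_le (fun hf => abs_integral_sub_integral_le_wassersteinDist hμ hν hf)
      wassersteinDist_nonneg
  refine le_antisymm (Real.iSup_le hle wassersteinDist_nonneg)
    (le_of_forall_pos_lt_add fun ε hε => ?_)
  obtain ⟨f, hf, hlt⟩ := exists_lipschitzWith_wassersteinDist_sub_lt hμ hν hε
  calc wassersteinDist μ ν < |(∫ x, f x ∂μ) - ∫ x, f x ∂ν| + ε := by
        linarith [le_abs_self ((∫ x, f x ∂μ) - ∫ x, f x ∂ν)]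
    _ ≤ _ := by
      gcongr
      refine le_ciSup_of_le ⟨_, Set.forall_mem_range.2 hle⟩ f ?_
      rw [ciSup_pos (show f ∈ {f : X → ℝ | LipschitzWith 1 f} from hf)]

/-- Kantorovich–Rubinstein duality: for Borel probability measures `μ`, `ν` with
finite first moments on a complete separable metric space, the integral probability
metric induced by the family of all 1-Lipschitz functions equals the 1-Wasserstein
distance. -/
theorem stmt_2 {X : Type*} [MetricSpace X] [CompleteSpace X]
    [TopologicalSpace.SeparableSpace X] [MeasurableSpace X] [BorelSpace X]
    (μ ν : Measure X) [IsProbabilityMeasure μ] [IsProbabilityMeasure ν]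
    (hμ : HasFiniteFirstMoment μ) (hν : HasFiniteFirstMoment ν) :
    (⨆ f ∈ {f : X → ℝ | LipschitzWith 1 f}, |(∫ x, f x ∂μ) - ∫ x, f x ∂ν|)
      = wassersteinDist μ ν :=
  stmt_2_general μ ν hμ hν
end

section
/- Let α be the uniform discrete measure on points x₁,…,x_n ∈ ℝ^d (each with mass 1/n) and β the uniform discrete measure on points x̃₁,…,x̃_m (each with mass 1/m), with cost matrix D given by squared Euclidean distances. Let α′ be obtained from α by adding one outlier point x′, with all n+1 points of α′ given uniform mass 1/(n+1). Then the unregularized unbalanced optimal transport discrepancies satisfy W^{0,κ}(α′, β) − W^{0,κ}(α, β) ≤ 2κ·(1 − exp(−Σ_{j=1}^m ‖x′ − x̃_j‖²/(2κ)))/(n+1), and in particular the increase is upper bounded by 2κ/(n+1). -/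
open scoped BigOperators

/-- The generalized KL divergence `KL(z‖a) = Σ_i (z_i log(z_i/a_i) - z_i + a_i)`.
(Since `Real.log 0 = 0` in Lean, the convention `0·log 0 = 0` is automatic.) -/
noncomputable def genKL {n : ℕ} (z a : Fin n → ℝ) : ℝ :=
  ∑ i, (z i * Real.log (z i / a i) - z i + a i)

/-- The unregularized unbalanced optimal transport discrepancy
`W^{0,κ}(a,b) = inf_{π ≥ 0} [Σ_{ij} D_{ij} π_{ij} + κ KL(π𝟙‖a) + κ KL(πᵀ𝟙‖b)]`. -/
noncomputable def UOT {n m : ℕ} (D : Matrix (Fin n) (Fin m) ℝ)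
    (a : Fin n → ℝ) (b : Fin m → ℝ) (κ : ℝ) : ℝ :=
  sInf {c : ℝ | ∃ π : Matrix (Fin n) (Fin m) ℝ, (∀ i j, 0 ≤ π i j) ∧
    c = (∑ i, ∑ j, D i j * π i j)
        + κ * genKL (fun i => ∑ j, π i j) a
        + κ * genKL (fun j => ∑ i, π i j) b}

/-!
Take any plan `π` for `(α, β)`. Scaling it by `s = n/(n+1)` and appending the row `u/(n+1)`
for the outlier gives a plan for `(α', β)`. The KL terms are jointly 1-homogeneous and convex, so
its cost is at most `s` times the cost of `π` plus `1/(n+1)` times the cost of sending the unit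
mass `δ_{x'}` to `β` along `u`. For the Gibbs choice `u_j ∝ b_j exp(-d_j/κ)`, the last cost is
`2κ(1 - q)` with `q = √(Σ_j b_j exp(-d_j/κ)) ≥ exp(-Σ_j d_j/(2κ))`.
-/

open Finset InformationTheory

section

variable {n m : ℕ}

lemma genKL_eq_sum_mul_klFun (z : Fin n → ℝ) {a : Fin n → ℝ} (ha : ∀ i, 0 < a i) :
    genKL z a = ∑ i, a i * klFun (z i / a i) := by
  refine sum_congr rfl fun i _ => ?_
  have hai := (ha i).ne'
  rw [klFun_apply]
  field_simp
  ring

lemma genKL_nonneg {z a : Fin n → ℝ} (hz : ∀ i, 0 ≤ z i) (ha : ∀ i, 0 < a i) :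
    0 ≤ genKL z a := by
  rw [genKL_eq_sum_mul_klFun z ha]
  exact sum_nonneg fun i _ => mul_nonneg (ha i).le (klFun_nonneg (div_nonneg (hz i) (ha i).le))

lemma genKL_convex_comb_le {z w a : Fin n → ℝ} (hz : ∀ i, 0 ≤ z i) (hw : ∀ i, 0 ≤ w i)
    (ha : ∀ i, 0 < a i) {s : ℝ} (hs₀ : 0 ≤ s) (hs₁ : s ≤ 1) :
    genKL (fun i => s * z i + (1 - s) * w i) a ≤ s * genKL z a + (1 - s) * genKL w a := by
  simp only [genKL_eq_sum_mul_klFun _ ha, mul_sum, ← sum_add_distrib]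
  refine sum_le_sum fun i _ => ?_
  have hconv := convexOn_klFun.2 (Set.mem_Ici.2 (div_nonneg (hz i) (ha i).le))
    (Set.mem_Ici.2 (div_nonneg (hw i) (ha i).le)) hs₀ (sub_nonneg.2 hs₁) (add_sub_cancel s 1)
  simp only [smul_eq_mul] at hconv
  rw [add_div, mul_div_assoc, mul_div_assoc]
  nlinarith [mul_le_mul_of_nonneg_left hconv (ha i).le]

-- Plans are plain functions rather than `Matrix`, so that the `Fin.snoc` simp lemmas apply.
noncomputable def uotObjective (D : Fin n → Fin m → ℝ) (a : Fin n → ℝ) (b : Fin m → ℝ)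
    (κ : ℝ) (π : Fin n → Fin m → ℝ) : ℝ :=
  (∑ i, ∑ j, D i j * π i j) + κ * genKL (fun i => ∑ j, π i j) a
    + κ * genKL (fun j => ∑ i, π i j) b

lemma uotObjective_nonneg {D : Fin n → Fin m → ℝ} (hD : ∀ i j, 0 ≤ D i j)
    {a : Fin n → ℝ} {b : Fin m → ℝ} (ha : ∀ i, 0 < a i) (hb : ∀ j, 0 < b j)
    {κ : ℝ} (hκ : 0 ≤ κ) {π : Fin n → Fin m → ℝ} (hπ : ∀ i j, 0 ≤ π i j) :
    0 ≤ uotObjective D a b κ π := by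
  have hcost : 0 ≤ ∑ i, ∑ j, D i j * π i j :=
    sum_nonneg fun i _ => sum_nonneg fun j _ => mul_nonneg (hD i j) (hπ i j)
  have hrow : 0 ≤ genKL (fun i => ∑ j, π i j) a :=
    genKL_nonneg (fun i => sum_nonneg fun j _ => hπ i j) ha
  have hcol : 0 ≤ genKL (fun j => ∑ i, π i j) b :=
    genKL_nonneg (fun j => sum_nonneg fun i _ => hπ i j) hb
  unfold uotObjective
  positivity

lemma UOT_le_uotObjective {D : Fin n → Fin m → ℝ} (hD : ∀ i j, 0 ≤ D i j)
    {a : Fin n → ℝ} {b : Fin m → ℝ} (ha : ∀ i, 0 < a i) (hb : ∀ j, 0 < b j)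
    {κ : ℝ} (hκ : 0 ≤ κ) {π : Fin n → Fin m → ℝ} (hπ : ∀ i j, 0 ≤ π i j) :
    UOT D a b κ ≤ uotObjective D a b κ π := by
  refine csInf_le ⟨0, ?_⟩ ⟨π, hπ, rfl⟩
  rintro _ ⟨π', hπ', rfl⟩
  exact uotObjective_nonneg hD ha hb hκ hπ'

lemma le_UOT {D : Fin n → Fin m → ℝ} {a : Fin n → ℝ} {b : Fin m → ℝ} {κ c : ℝ}
    (h : ∀ π : Fin n → Fin m → ℝ, (∀ i j, 0 ≤ π i j) → c ≤ uotObjective D a b κ π) :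
    c ≤ UOT D a b κ := by
  refine le_csInf ⟨_, 0, fun _ _ => le_rfl, rfl⟩ ?_
  rintro _ ⟨π, hπ, rfl⟩
  exact h π hπ

noncomputable def pointObjective (d : Fin m → ℝ) (b : Fin m → ℝ) (κ : ℝ) (u : Fin m → ℝ) : ℝ :=
  ∑ j, d j * u j + κ * klFun (∑ j, u j) + κ * genKL u b

lemma snoc_smul_one_sub_pos {a : Fin n → ℝ} (ha : ∀ i, 0 < a i) {s : ℝ} (hs₀ : 0 < s)
    (hs₁ : s < 1) (i : Fin (n + 1)) : 0 < (Fin.snoc (s • a) (1 - s) : Fin (n + 1) → ℝ) i :=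
  Fin.lastCases (by simpa using hs₁) (fun i => by simpa using mul_pos hs₀ (ha i)) i

lemma uotObjective_snoc_le (D : Fin n → Fin m → ℝ) (d : Fin m → ℝ)
    {a : Fin n → ℝ} {b : Fin m → ℝ} (ha : ∀ i, 0 < a i) (hb : ∀ j, 0 < b j)
    {κ : ℝ} (hκ : 0 ≤ κ) {s : ℝ} (hs₀ : 0 < s) (hs₁ : s < 1)
    {π : Fin n → Fin m → ℝ} (hπ : ∀ i j, 0 ≤ π i j) {u : Fin m → ℝ} (hu : ∀ j, 0 ≤ u j) :
    uotObjective (Fin.snoc D d : Fin (n + 1) → Fin m → ℝ) (Fin.snoc (s • a) (1 - s)) b κ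
        (Fin.snoc (s • π) ((1 - s) • u) : Fin (n + 1) → Fin m → ℝ)
      ≤ s * uotObjective D a b κ π + (1 - s) * pointObjective d b κ u := by
  set P : Fin (n + 1) → Fin m → ℝ := Fin.snoc (s • π) ((1 - s) • u)
  have hcost : ∑ i, ∑ j, (Fin.snoc D d : Fin (n + 1) → Fin m → ℝ) i j * P i j
      = s * ∑ i, ∑ j, D i j * π i j + (1 - s) * ∑ j, d j * u j := by
    simp only [P, Fin.sum_univ_castSucc, Fin.snoc_castSucc, Fin.snoc_last, Pi.smul_apply,
      smul_eq_mul, mul_sum]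
    congr 1 <;> refine sum_congr rfl fun _ _ => ?_
    · exact sum_congr rfl fun _ _ => by ring
    · ring
  have hrow : genKL (fun i => ∑ j, P i j) (Fin.snoc (s • a) (1 - s))
      = s * genKL (fun i => ∑ j, π i j) a + (1 - s) * klFun (∑ j, u j) := by
    rw [genKL_eq_sum_mul_klFun _ (snoc_smul_one_sub_pos ha hs₀ hs₁),
      genKL_eq_sum_mul_klFun _ ha, Fin.sum_univ_castSucc]
    simp only [P, Fin.snoc_castSucc, Fin.snoc_last, Pi.smul_apply, smul_eq_mul, ← mul_sum,
      mul_div_mul_left _ _ hs₀.ne', mul_div_cancel_left₀ _ (sub_pos.2 hs₁).ne', mul_assoc]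
  have hcol : genKL (fun j => ∑ i, P i j) b
      ≤ s * genKL (fun j => ∑ i, π i j) b + (1 - s) * genKL u b := by
    have hsum : (fun j => ∑ i, P i j) = fun j => s * ∑ i, π i j + (1 - s) * u j := by
      funext j
      simp only [P, Fin.sum_univ_castSucc, Fin.snoc_castSucc, Fin.snoc_last, Pi.smul_apply,
        smul_eq_mul, mul_sum]
    rw [hsum]
    exact genKL_convex_comb_le (fun j => sum_nonneg fun i _ => hπ i j) hu hb hs₀.le hs₁.le
  unfold uotObjective pointObjective
  rw [hcost, hrow]
  nlinarith [mul_le_mul_of_nonneg_left hcol hκ]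

lemma UOT_snoc_le {D : Fin n → Fin m → ℝ} (hD : ∀ i j, 0 ≤ D i j) {d : Fin m → ℝ}
    (hd : ∀ j, 0 ≤ d j) {a : Fin n → ℝ} {b : Fin m → ℝ} (ha : ∀ i, 0 < a i) (hb : ∀ j, 0 < b j)
    {κ : ℝ} (hκ : 0 ≤ κ) {s : ℝ} (hs₀ : 0 < s) (hs₁ : s < 1) {u : Fin m → ℝ}
    (hu : ∀ j, 0 ≤ u j) :
    UOT (Fin.snoc D d : Fin (n + 1) → Fin m → ℝ) (Fin.snoc (s • a) (1 - s)) b κ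
      ≤ UOT D a b κ + (1 - s) * pointObjective d b κ u := by
  rw [← sub_le_iff_le_add]
  refine le_UOT fun π hπ => ?_
  have hsnocD : ∀ i j, 0 ≤ (Fin.snoc D d : Fin (n + 1) → Fin m → ℝ) i j := fun i =>
    Fin.lastCases (by simpa using hd) (fun i => by simpa using hD i) i
  have hsnocπ : ∀ i j, 0 ≤ (Fin.snoc (s • π) ((1 - s) • u) : Fin (n + 1) → Fin m → ℝ) i j :=
    fun i => Fin.lastCases (fun j => by simpa using mul_nonneg (sub_pos.2 hs₁).le (hu j))
      (fun i j => by simpa using mul_nonneg hs₀.le (hπ i j)) i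
  have hle := (UOT_le_uotObjective hsnocD (snoc_smul_one_sub_pos ha hs₀ hs₁) hb hκ hsnocπ).trans
    (uotObjective_snoc_le D d ha hb hκ hs₀ hs₁ hπ hu)
  have hπ_nonneg := uotObjective_nonneg hD ha hb hκ hπ
  nlinarith

lemma pointObjective_gibbs {d b : Fin m → ℝ} (hb : ∀ j, 0 < b j) {κ q : ℝ} (hκ : 0 < κ)
    (hq : 0 < q) (hq_sq : q ^ 2 = ∑ j, b j * Real.exp (-d j / κ)) :
    pointObjective d b κ (fun j => b j * Real.exp (-d j / κ) / q)
      = κ * (1 + ∑ j, b j - 2 * q) := by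
  -- `u` solves the stationarity condition `d j + κ log (∑ u) + κ log (u j / b j) = 0`
  set u : Fin m → ℝ := fun j => b j * Real.exp (-d j / κ) / q
  have hsum : ∑ j, u j = q := by
    rw [← sum_div, ← hq_sq]
    field_simp
  have hlog : ∀ j, u j * Real.log (u j / b j) = -(d j * u j) / κ - Real.log q * u j := by
    intro j
    have hbj := (hb j).ne'
    rw [show u j / b j = Real.exp (-d j / κ) / q by simp only [u]; field_simp,
      Real.log_div (Real.exp_pos _).ne' hq.ne', Real.log_exp]
    ring
  have hKL : genKL u b = -(∑ j, d j * u j) / κ - Real.log q * q - q + ∑ j, b j := by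
    calc genKL u b = ∑ j, (-(d j * u j) / κ - Real.log q * u j - u j + b j) :=
          sum_congr rfl fun j _ => by rw [hlog]
      _ = _ := by
          rw [sum_add_distrib, sum_sub_distrib, sum_sub_distrib, ← sum_div, sum_neg_distrib,
            ← mul_sum, hsum]
  unfold pointObjective
  rw [hsum, hKL, klFun_apply]
  field_simp
  ring

lemma exp_neg_sum_div_two_le_sqrt {d b : Fin m → ℝ} (hd : ∀ j, 0 ≤ d j) (hb : ∀ j, 0 ≤ b j)
    (hb_sum : ∑ j, b j = 1) {κ : ℝ} (hκ : 0 < κ) :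
    Real.exp (-(∑ j, d j) / (2 * κ)) ≤ √(∑ j, b j * Real.exp (-d j / κ)) := by
  rw [show -(∑ j, d j) / (2 * κ) = -(∑ j, d j) / κ / 2 by ring, Real.exp_half]
  refine Real.sqrt_le_sqrt ?_
  calc Real.exp (-(∑ j, d j) / κ) = ∑ j, b j * Real.exp (-(∑ j, d j) / κ) := by
        rw [← sum_mul, hb_sum, one_mul]
    _ ≤ ∑ j, b j * Real.exp (-d j / κ) := by
        refine sum_le_sum fun j _ => mul_le_mul_of_nonneg_left ?_ (hb j)
        refine Real.exp_le_exp.2 (div_le_div_of_nonneg_right (neg_le_neg ?_) hκ.le)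
        exact single_le_sum (fun j _ => hd j) (mem_univ j)

lemma UOT_snoc_uniform_le (hn : 0 < n) {D : Fin n → Fin m → ℝ} (hD : ∀ i j, 0 ≤ D i j)
    {d : Fin m → ℝ} (hd : ∀ j, 0 ≤ d j) {b : Fin m → ℝ} (hb : ∀ j, 0 < b j) {κ : ℝ}
    (hκ : 0 ≤ κ) {u : Fin m → ℝ} (hu : ∀ j, 0 ≤ u j) :
    UOT (Fin.snoc D d : Fin (n + 1) → Fin m → ℝ) (fun _ => 1 / ((n : ℝ) + 1)) b κ
      ≤ UOT D (fun _ => 1 / (n : ℝ)) b κ + pointObjective d b κ u / (n + 1) := by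
  have hn' : (0 : ℝ) < n := Nat.cast_pos.2 hn
  set s : ℝ := n / (n + 1)
  have h1s : 1 - s = 1 / (n + 1) := by simp only [s]; field_simp; ring
  have ha : (fun _ : Fin (n + 1) => 1 / ((n : ℝ) + 1))
      = Fin.snoc (s • fun _ : Fin n => 1 / (n : ℝ)) (1 - s) := by
    funext i
    refine Fin.lastCases ?_ (fun i => ?_) i
    · simp [h1s]
    · simp only [Fin.snoc_castSucc, Pi.smul_apply, smul_eq_mul, s]
      field_simp
  have hsnoc := UOT_snoc_le hD hd (fun _ => one_div_pos.2 hn') hb hκ (s := s) (by positivity)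
    ((div_lt_one (by positivity)).2 (lt_add_one _)) hu
  rwa [← ha, h1s, one_div_mul_eq_div] at hsnoc

end

/-- Adding an outlier `x'` to the uniform discrete measure `α` on `x₁,…,x_n`
(the disturbed measure `α'` being uniform on the `n+1` points, with squared
Euclidean costs to the support `x̃₁,…,x̃_m` of the uniform measure `β`) increases
the unbalanced optimal transport discrepancy `W^{0,κ}` by at most
`2κ(1 − exp(−Σ_j ‖x' − x̃_j‖²/(2κ)))/(n+1)`, which is itself at most `2κ/(n+1)`. -/
theorem stmt_5 {d n m : ℕ} (hn : 0 < n) (hm : 0 < m) (κ : ℝ) (hκ : 0 < κ)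
    (x : Fin n → EuclideanSpace ℝ (Fin d)) (xt : Fin m → EuclideanSpace ℝ (Fin d))
    (x' : EuclideanSpace ℝ (Fin d)) :
    UOT (fun i j => ‖(Fin.snoc x x' : Fin (n+1) → EuclideanSpace ℝ (Fin d)) i - xt j‖ ^ 2)
        (fun _ : Fin (n + 1) => 1 / ((n : ℝ) + 1)) (fun _ : Fin m => 1 / (m : ℝ)) κ
      - UOT (fun i j => ‖x i - xt j‖ ^ 2)
        (fun _ : Fin n => 1 / (n : ℝ)) (fun _ : Fin m => 1 / (m : ℝ)) κ
      ≤ 2 * κ * (1 - Real.exp (-(∑ j, ‖x' - xt j‖ ^ 2) / (2 * κ))) / ((n : ℝ) + 1) ∧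
    2 * κ * (1 - Real.exp (-(∑ j, ‖x' - xt j‖ ^ 2) / (2 * κ))) / ((n : ℝ) + 1)
      ≤ 2 * κ / ((n : ℝ) + 1) := by
  have hb : ∀ _ : Fin m, (0 : ℝ) < 1 / m := fun _ => one_div_pos.2 (Nat.cast_pos.2 hm)
  have hb_sum : ∑ _j : Fin m, 1 / (m : ℝ) = 1 := by simp [hm.ne']
  have hq := exp_neg_sum_div_two_le_sqrt (fun j => sq_nonneg ‖x' - xt j‖)
    (fun j => (hb j).le) hb_sum hκ
  set q := √(∑ j : Fin m, 1 / (m : ℝ) * Real.exp (-‖x' - xt j‖ ^ 2 / κ))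
  have hq₀ : 0 < q := (Real.exp_pos _).trans_le hq
  have hcost : (fun i j => ‖(Fin.snoc x x' : Fin (n+1) → EuclideanSpace ℝ (Fin d)) i - xt j‖ ^ 2)
      = (Fin.snoc (fun i j => ‖x i - xt j‖ ^ 2) (fun j => ‖x' - xt j‖ ^ 2) :
          Fin (n + 1) → Fin m → ℝ) := by
    funext i j
    exact Fin.lastCases (by simp) (fun i => by simp) i
  have hadd := UOT_snoc_uniform_le hn (fun i j => sq_nonneg ‖x i - xt j‖)
    (fun j => sq_nonneg ‖x' - xt j‖) hb hκ.le
    (u := fun j => 1 / (m : ℝ) * Real.exp (-‖x' - xt j‖ ^ 2 / κ) / q) (fun _ => by positivity)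
  rw [pointObjective_gibbs hb hκ hq₀ (Real.sq_sqrt (by positivity)), hb_sum, ← hcost] at hadd
  have hexp := Real.exp_pos (-(∑ j, ‖x' - xt j‖ ^ 2) / (2 * κ))
  constructor
  · have hgap : κ * (1 + 1 - 2 * q) / ((n : ℝ) + 1)
        ≤ 2 * κ * (1 - Real.exp (-(∑ j, ‖x' - xt j‖ ^ 2) / (2 * κ))) / ((n : ℝ) + 1) :=
      div_le_div_of_nonneg_right (by nlinarith) (by positivity)
    linarith
  · exact div_le_div_of_nonneg_right (by nlinarith) (by positivity)
end

section
/- Let ε > 0, D ∈ ℝ^{n×m}, K_{ij} = exp(−D_{ij}/ε), and let a ∈ ℝ^n, b ∈ ℝ^m be probability vectors. If there exist strictly positive vectors u ∈ ℝ^n_{>0} and v ∈ ℝ^m_{>0} satisfying the matrix scaling equations u ⊙ (Kv) = a and v ⊙ (Kᵀu) = b (where ⊙ is entrywise multiplication), then the matrix π = diag(u) K diag(v), i.e., π_{ij} = u_i K_{ij} v_j, belongs to Π(a,b) and is the unique minimizer over Π(a,b) of the entropic-regularized objective J(π) = Σ_{ij} D_{ij} π_{ij} + ε·Σ_{ij}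 π_{ij}(log π_{ij} − 1). -/
open scoped BigOperators

lemma kl_pos (x y : ℝ) (hx : 0 ≤ x) (hy : 0 < y) (hne : x ≠ y) :
    0 < x * (Real.log x - Real.log y) - x + y := by
  rcases hx.eq_or_lt with h | h
  · rw [← h]; simpa using hy
  · have hyx : y / x ≠ 1 := by
      intro hh
      exact hne ((div_eq_one_iff_eq (ne_of_gt h)).mp hh).symm
    have h1 : Real.log (y / x) < y / x - 1 :=
      Real.log_lt_sub_one_of_pos (div_pos hy h) hyx
    rw [Real.log_div (ne_of_gt hy) (ne_of_gt h)] at h1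
    have h2 := mul_lt_mul_of_pos_left h1 h
    have hxy : x * (y / x - 1) = y - x := by field_simp
    nlinarith

lemma kl_nonneg (x y : ℝ) (hx : 0 ≤ x) (hy : 0 < y) :
    0 ≤ x * (Real.log x - Real.log y) - x + y := by
  by_cases hne : x = y
  · subst hne; ring_nf; nlinarith [hx]
  · exact (kl_pos x y hx hy hne).le

/-- The transport polytope `Π(a,b)` of nonnegative matrices with row sums `a`
and column sums `b`. -/
def transportPolytope {n m : ℕ} (a : Fin n → ℝ) (b : Fin m → ℝ) :
    Set (Matrix (Fin n) (Fin m) ℝ) :=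
  {π | (∀ i j, 0 ≤ π i j) ∧ (∀ i, ∑ j, π i j = a i) ∧ (∀ j, ∑ i, π i j = b j)}

/-- The entropic-regularized objective
`J(π) = Σ_{ij} D_{ij} π_{ij} + ε Σ_{ij} π_{ij} (log π_{ij} - 1)`.
(Since `Real.log 0 = 0` in Lean, the convention `0·(log 0 − 1) = 0` is automatic.) -/
noncomputable def entropicObj {n m : ℕ} (D : Matrix (Fin n) (Fin m) ℝ) (ε : ℝ)
    (π : Matrix (Fin n) (Fin m) ℝ) : ℝ :=
  (∑ i, ∑ j, D i j * π i j) + ε * ∑ i, ∑ j, π i j * (Real.log (π i j) - 1)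

/-- If strictly positive vectors `u`, `v` satisfy the matrix scaling equations
`u ⊙ (K v) = a` and `v ⊙ (Kᵀ u) = b` with `K_{ij} = exp(-D_{ij}/ε)`, then
`π = diag(u) K diag(v)` belongs to `Π(a,b)` and is the unique minimizer of the
entropic-regularized objective `J` over `Π(a,b)`. -/
theorem stmt_11 {n m : ℕ} (ε : ℝ) (hε : 0 < ε)
    (D : Matrix (Fin n) (Fin m) ℝ)
    (a : Fin n → ℝ) (b : Fin m → ℝ)
    (ha0 : ∀ i, 0 ≤ a i) (ha1 : ∑ i, a i = 1)
    (hb0 : ∀ j, 0 ≤ b j) (hb1 : ∑ j, b j = 1)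
    (u : Fin n → ℝ) (v : Fin m → ℝ)
    (hu : ∀ i, 0 < u i) (hv : ∀ j, 0 < v j)
    (hscale1 : ∀ i, u i * (∑ j, Real.exp (-D i j / ε) * v j) = a i)
    (hscale2 : ∀ j, v j * (∑ i, Real.exp (-D i j / ε) * u i) = b j) :
    (fun i j => u i * Real.exp (-D i j / ε) * v j) ∈ transportPolytope a b ∧
    ∀ π' ∈ transportPolytope a b,
      π' ≠ (fun i j => u i * Real.exp (-D i j / ε) * v j) →
      entropicObj D ε (fun i j => u i * Real.exp (-D i j / ε) * v j)
        < entropicObj D ε π' := by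
  set πs : Matrix (Fin n) (Fin m) ℝ := fun i j => u i * Real.exp (-D i j / ε) * v j
    with hπs
  have hπspos : ∀ i j, 0 < πs i j := fun i j => by
    exact mul_pos (mul_pos (hu i) (Real.exp_pos _)) (hv j)
  have hrow : ∀ i, ∑ j, πs i j = a i := by
    intro i
    simp only [hπs, mul_assoc, ← Finset.mul_sum]
    exact hscale1 i
  have hcol : ∀ j, ∑ i, πs i j = b j := by
    intro j
    have h1 : ∀ i ∈ Finset.univ, πs i j = v j * (Real.exp (-D i j / ε) * u i) :=
      fun i _ => by simp only [hπs]; ring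
    rw [Finset.sum_congr rfl h1, ← Finset.mul_sum]
    exact hscale2 j
  have hmem : πs ∈ transportPolytope a b :=
    ⟨fun i j => (hπspos i j).le, hrow, hcol⟩
  have hlogπs : ∀ i j, Real.log (πs i j) =
      Real.log (u i) + (-D i j / ε) + Real.log (v j) := by
    intro i j
    simp only [hπs]
    rw [Real.log_mul (mul_pos (hu i) (Real.exp_pos _)).ne' (ne_of_gt (hv j)),
      Real.log_mul (ne_of_gt (hu i)) (Real.exp_ne_zero _), Real.log_exp]
  -- Key identity for any element of the polytope
  have key : ∀ π ∈ transportPolytope a b, entropicObj D ε π =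
      ε * (∑ i, ∑ j, (π i j * (Real.log (π i j) - Real.log (πs i j)) - π i j)) +
      ε * ((∑ i, a i * Real.log (u i)) + (∑ j, b j * Real.log (v j))) := by
    rintro π ⟨h0, hr, hc⟩
    have hA : ∑ i, ∑ j, π i j * Real.log (u i) = ∑ i, a i * Real.log (u i) := by
      refine Finset.sum_congr rfl fun i _ => ?_
      rw [← Finset.sum_mul, hr i]
    have hB : ∑ i, ∑ j, π i j * Real.log (v j) = ∑ j, b j * Real.log (v j) := by
      rw [Finset.sum_comm]
      refine Finset.sum_congr rfl fun j _ => ?_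
      rw [← Finset.sum_mul, hc j]
    have hC : ∑ i, ∑ j, π i j * (-D i j / ε) = -(1/ε) * ∑ i, ∑ j, D i j * π i j := by
      rw [Finset.mul_sum]
      refine Finset.sum_congr rfl fun i _ => ?_
      rw [Finset.mul_sum]
      refine Finset.sum_congr rfl fun j _ => ?_
      ring
    have hsplit : ∑ i, ∑ j, (π i j * (Real.log (π i j) - Real.log (πs i j)) - π i j)
        = (∑ i, ∑ j, π i j * (Real.log (π i j) - 1))
          - (∑ i, ∑ j, π i j * Real.log (πs i j)) := by
      simp_rw [show ∀ i j, π i j * (Real.log (π i j) - Real.log (πs i j)) - π i j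
          = π i j * (Real.log (π i j) - 1) - π i j * Real.log (πs i j) from
        fun i j => by ring, Finset.sum_sub_distrib]
    have hlogsum : ∑ i, ∑ j, π i j * Real.log (πs i j)
        = (∑ i, ∑ j, π i j * Real.log (u i))
          + (∑ i, ∑ j, π i j * (-D i j / ε))
          + (∑ i, ∑ j, π i j * Real.log (v j)) := by
      simp_rw [hlogπs, mul_add, Finset.sum_add_distrib]
    rw [entropicObj, hsplit, hlogsum, hA, hB, hC]
    field_simp
    ring
  refine ⟨hmem, fun π' hπ' hne => ?_⟩
  obtain ⟨h0', hr', hc'⟩ := hπ'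
  have hsumπs : ∑ i, ∑ j, πs i j = 1 := by
    simp_rw [hrow]; exact ha1
  -- positivity of the relative-entropy gap
  have hij : ∃ i j, π' i j ≠ πs i j := by
    obtain ⟨i, hi⟩ := Function.ne_iff.mp hne
    obtain ⟨j, hj⟩ := Function.ne_iff.mp hi
    exact ⟨i, j, hj⟩
  obtain ⟨i0, j0, hne0⟩ := hij
  have hpos : 0 < ∑ i, ∑ j,
      (π' i j * (Real.log (π' i j) - Real.log (πs i j)) - π' i j + πs i j) := by
    refine Finset.sum_pos' (fun i _ => Finset.sum_nonneg fun j _ =>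
      kl_nonneg _ _ (h0' i j) (hπspos i j)) ⟨i0, Finset.mem_univ _, ?_⟩
    refine Finset.sum_pos' (fun j _ => kl_nonneg _ _ (h0' i0 j) (hπspos i0 j))
      ⟨j0, Finset.mem_univ _, kl_pos _ _ (h0' i0 j0) (hπspos i0 j0) hne0⟩
  have hexp : ∑ i, ∑ j,
      (π' i j * (Real.log (π' i j) - Real.log (πs i j)) - π' i j + πs i j)
      = (∑ i, ∑ j, (π' i j * (Real.log (π' i j) - Real.log (πs i j)) - π' i j))
        + ∑ i, ∑ j, πs i j := by
    simp_rw [Finset.sum_add_distrib]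
  have hSs : ∑ i, ∑ j, (πs i j * (Real.log (πs i j) - Real.log (πs i j)) - πs i j)
      = -1 := by
    simp_rw [sub_self, mul_zero, zero_sub, Finset.sum_neg_distrib]
    rw [hsumπs]
  rw [key π' ⟨h0', hr', hc'⟩, key πs hmem, hSs]
  have := mul_pos hε hpos
  rw [hexp, hsumπs] at this
  nlinarith [this]
end
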